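/- arXiv:2402.02693 — 2 statements merged into one kernel-verified Lean document; each statement's English description precedes it below -/
import Mathlib

section
/- Let λ be a limit ordinal, let j be a strictly increasing function from the ordinals below λ to the ordinals, and set δ := sup{j(ξ) : ξ < λ}. Let C be a set of ordinals below δ that is closed below δ, i.e., whenever s ⊆ C is nonempty, sup s < δ, and sup s is a limit of elements of s, then sup s ∈ C. Let D ⊆ {ξ : ξ < λ} be unbounded in λ and such that for all ξ₀ < ξ₁ with ξ₀, ξ₁ ∈ D there exists γ ∈ C with j(ξ₀) ≤ γ ≤ j(ξ₁). Then for every η < λ such that η is a limit point of D (i.e., D ∩ η is unbounded in η and η is a limit ordinal) and such that j(η) = sup{j(ξ) : ξ < η}, we have j(η) ∈ C. -/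
/-!
The points of `D` are cofinal below `η`, so by continuity their `j`-values are cofinal in
`j η = sup j[η]`; between the `j`-values of any two of them lies a point of `C`. Hence `C` is
cofinal in `j η`, and since `j η < j (η + 1) ≤ sup j[lam]`, closedness of `C` puts `j η` in `C`.
-/

/-- `η` is a limit point of the set of ordinals `A`:
`η` is a limit ordinal and `A ∩ η` is unbounded in `η`. -/
def IsLimitPointOf (A : Set Ordinal) (η : Ordinal) : Prop :=
  Order.IsSuccLimit η ∧ ∀ γ < η, ∃ x ∈ A, γ < x ∧ x < η

open Set Order

def ClosedBelow (C : Set Ordinal) (δ : Ordinal) : Prop :=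
  ∀ s ⊆ C, s.Nonempty → sSup s < δ → (∀ γ < sSup s, ∃ x ∈ s, γ < x ∧ x < sSup s) → sSup s ∈ C

theorem isLimitPointOf_of_exists_between {A : Set Ordinal} {a b : Ordinal} (hb : b < a)
    (h : ∀ b < a, ∃ c ∈ A, b < c ∧ c < a) : IsLimitPointOf A a :=
  ⟨⟨not_isMin_of_lt hb, fun c hc ↦
    let ⟨_, _, hcd, hda⟩ := h c hc.lt
    hc.2 hcd hda⟩, h⟩

theorem IsLimitPointOf.mem_of_closedBelow {C : Set Ordinal} {δ a : Ordinal}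
    (hC : ClosedBelow C δ) (ha : IsLimitPointOf C a) (haδ : a < δ) : a ∈ C := by
  obtain ⟨c, hc, -, hca⟩ := ha.2 0 ha.1.pos
  have hsup : sSup (C ∩ Iio a) = a :=
    csSup_eq_of_forall_le_of_forall_lt_exists_gt ⟨c, hc, hca⟩ (fun x hx ↦ hx.2.le) fun b hb ↦
      let ⟨x, hx, hbx, hxa⟩ := ha.2 b hb
      ⟨x, ⟨hx, hxa⟩, hbx⟩
  have hsC := hC (C ∩ Iio a) inter_subset_left ⟨c, hc, hca⟩ (by rwa [hsup]) fun b hb ↦ by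
    obtain ⟨x, hx, hbx, hxa⟩ := ha.2 b (hsup ▸ hb)
    exact ⟨x, ⟨hx, hxa⟩, hbx, hsup.symm ▸ hxa⟩
  rwa [hsup] at hsC

theorem IsLimitPointOf.isLimitPointOf_apply {j : Ordinal → Ordinal} {C D : Set Ordinal}
    {η : Ordinal} (hj : StrictMonoOn j (Iic η)) (hη : IsLimitPointOf D η)
    (hcont : j η = sSup (j '' Iio η))
    (hhit : ∀ ξ₀ ∈ D, ∀ ξ₁ ∈ D, ξ₀ < ξ₁ → ∃ γ ∈ C, j ξ₀ ≤ γ ∧ γ ≤ j ξ₁) :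
    IsLimitPointOf C (j η) := by
  have hj_lt {ξ} (hξ : ξ < η) : j ξ < j η := hj (mem_Iic.2 hξ.le) (mem_Iic.2 le_rfl) hξ
  refine isLimitPointOf_of_exists_between (hj_lt hη.1.pos) fun β hβ ↦ ?_
  rw [hcont] at hβ
  obtain ⟨_, ⟨ξ, hξη, rfl⟩, hβξ⟩ := exists_lt_of_lt_csSup (Nonempty.image j ⟨0, hη.1.pos⟩) hβ
  obtain ⟨ξ₀, hξ₀, hξξ₀, hξ₀η⟩ := hη.2 ξ hξη
  obtain ⟨ξ₁, hξ₁, hξ₀ξ₁, hξ₁η⟩ := hη.2 ξ₀ hξ₀η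
  obtain ⟨γ, hγ, hξ₀γ, hγξ₁⟩ := hhit ξ₀ hξ₀ ξ₁ hξ₁ hξ₀ξ₁
  have hjξξ₀ : j ξ < j ξ₀ := hj (mem_Iic.2 hξη.le) (mem_Iic.2 hξ₀η.le) hξξ₀
  exact ⟨γ, hγ, hβξ.trans (hjξξ₀.trans_le hξ₀γ), hγξ₁.trans_lt (hj_lt hξ₁η)⟩

theorem bddAbove_of_lt_csSup {α : Type*} [ConditionallyCompleteLinearOrderBot α] {s : Set α}
    {a : α} (h : a < sSup s) : BddAbove s := by
  by_contra hs
  rw [csSup_of_not_bddAbove hs, csSup_empty] at h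
  exact not_lt_bot h

theorem StrictMonoOn.apply_lt_csSup_image {α : Type*} [ConditionallyCompleteLinearOrder α]
    {j : Ordinal → α} {lam η : Ordinal} (hj : StrictMonoOn j (Iio lam))
    (hbdd : BddAbove (j '' Iio lam)) (hlam : IsSuccLimit lam) (hη : η < lam) :
    j η < sSup (j '' Iio lam) :=
  have hsucc : succ η < lam := hlam.succ_lt hη
  (hj hη hsucc (lt_succ η)).trans_le (le_csSup hbdd (mem_image_of_mem j hsucc))

theorem limit_point_image_mem_closed_general (lam : Ordinal) (hlam : Order.IsSuccLimit lam)
    (j : Ordinal → Ordinal)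
    (hmono : ∀ ξ₀ ξ₁ : Ordinal, ξ₀ < ξ₁ → ξ₁ < lam → j ξ₀ < j ξ₁)
    (C : Set Ordinal)
    (hCsub : C ⊆ Set.Iio (sSup (j '' Set.Iio lam)))
    (hCclosed : ∀ s ⊆ C, s.Nonempty → sSup s < sSup (j '' Set.Iio lam) →
      (∀ γ < sSup s, ∃ x ∈ s, γ < x ∧ x < sSup s) → sSup s ∈ C)
    (D : Set Ordinal)
    (hhit : ∀ ξ₀ ∈ D, ∀ ξ₁ ∈ D, ξ₀ < ξ₁ → ∃ γ ∈ C, j ξ₀ ≤ γ ∧ γ ≤ j ξ₁) :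
    ∀ η < lam, IsLimitPointOf D η → j η = sSup (j '' Set.Iio η) → j η ∈ C := by
  intro η hηlam hη hcont
  have hj : StrictMonoOn j (Iio lam) := fun _ _ _ hb hab ↦ hmono _ _ hab hb
  have hjη : IsLimitPointOf C (j η) :=
    hη.isLimitPointOf_apply (hj.mono (Iic_subset_Iio.2 hηlam)) hcont hhit
  -- `j` may land in a lower universe, where its image need not be bounded; `C ≠ ∅` excludes this.
  obtain ⟨c, hc, -⟩ := hjη.2 0 hjη.1.pos
  have hbdd : BddAbove (j '' Iio lam) := bddAbove_of_lt_csSup (hCsub hc)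
  exact hjη.mem_of_closedBelow hCclosed (hj.apply_lt_csSup_image hbdd hlam hηlam)

/-- If `C ⊆ δ := sup (j '' (Iio lam))` is closed below `δ`, `D ⊆ lam` is
unbounded in `lam` and any two `j`-values of points of `D` have a point of `C` in between,
then for every limit point `η < lam` of `D` at which `j` is continuous, `j η ∈ C`. -/
theorem limit_point_image_mem_closed (lam : Ordinal) (hlam : Order.IsSuccLimit lam)
    (j : Ordinal → Ordinal)
    (hmono : ∀ ξ₀ ξ₁ : Ordinal, ξ₀ < ξ₁ → ξ₁ < lam → j ξ₀ < j ξ₁)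
    (C : Set Ordinal)
    (hCsub : C ⊆ Set.Iio (sSup (j '' Set.Iio lam)))
    (hCclosed : ∀ s ⊆ C, s.Nonempty → sSup s < sSup (j '' Set.Iio lam) →
      (∀ γ < sSup s, ∃ x ∈ s, γ < x ∧ x < sSup s) → sSup s ∈ C)
    (D : Set Ordinal) (hD : D ⊆ Set.Iio lam)
    (hDunb : ∀ γ < lam, ∃ ξ ∈ D, γ < ξ)
    (hhit : ∀ ξ₀ ∈ D, ∀ ξ₁ ∈ D, ξ₀ < ξ₁ → ∃ γ ∈ C, j ξ₀ ≤ γ ∧ γ ≤ j ξ₁) :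
    ∀ η < lam, IsLimitPointOf D η → j η = sSup (j '' Set.Iio η) → j η ∈ C :=
  limit_point_image_mem_closed_general lam hlam j hmono C hCsub hCclosed D hhit
end

section
/- Let λ be an ordinal and let j be a strictly increasing function from the ordinals below λ to the ordinals such that j(η) = sup{j(ξ) : ξ < η} for every ordinal η < λ of cofinality ω. Let E ⊆ {ξ : ξ < λ}, and let θ be an ordinal of cofinality ω such that θ is a limit point of j''E = {j(ξ) : ξ ∈ E} (i.e., j''E ∩ θ is unbounded in θ and θ is a limit ordinal) and such that θ ≤ j(ζ₀) for some ζ₀ < λ. Then there exists ζ < λ such that ζ is a limit point of E, ζ has cofinality ω, and j(ζ) = θ. -/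
open Set Order

universe u v

theorem Ordinal.lift_cof_eq_of_strictMonoOn {f : Ordinal.{u} → Ordinal.{v}} {a : Ordinal.{u}}
    {b : Ordinal.{v}} (hf : StrictMonoOn f (Iio a)) (hmaps : MapsTo f (Iio a) (Iio b))
    (hcofinal : ∀ y < b, ∃ x < a, y ≤ f x) :
    Cardinal.lift.{v} a.cof = Cardinal.lift.{u} b.cof := by
  have hcongr := lift_cof_congr_of_strictMono (f := hmaps.restrict)
    (fun x y hxy ↦ hf x.2 y.2 hxy) fun y ↦ by
      obtain ⟨x, hx, hyx⟩ := hcofinal y y.2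
      exact ⟨hmaps.restrict _ _ _ ⟨x, hx⟩, mem_range_self _, hyx⟩
  rw [cof_Iio, cof_Iio, ← lift_cof, ← lift_cof, Cardinal.lift_lift, Cardinal.lift_lift] at hcongr
  exact Cardinal.lift_umax_eq.{u, v, max (u + 1) (v + 1)}.1 hcongr

theorem lt_sInf_setOf_le_apply_iff {j : Ordinal.{u} → Ordinal.{v}} {lam x : Ordinal.{u}}
    {θ : Ordinal.{v}} (hj : MonotoneOn j (Iio lam)) (hne : ∃ ξ, θ ≤ j ξ) (hx : x < lam) :
    x < sInf {ξ | θ ≤ j ξ} ↔ j x < θ := by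
  refine ⟨fun h ↦ not_le.1 (notMem_of_lt_csInf' (s := {ξ | θ ≤ j ξ}) h), fun h ↦ ?_⟩
  by_contra! hle
  have hmem : θ ≤ j (sInf {ξ | θ ≤ j ξ}) := csInf_mem hne
  exact h.not_ge (hmem.trans (hj (hle.trans_lt hx) hx hle))

/-- If `j` is strictly increasing below `lam` and continuous at points of
cofinality `ω`, then every ω-cofinal limit point `θ` of `j '' E` lying below some `j`-value
is itself of the form `j ζ` for an ω-cofinal limit point `ζ` of `E`. -/
theorem omega_cofinal_limit_point_of_image (lam : Ordinal) (j : Ordinal → Ordinal)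
    (hmono : ∀ ξ₀ ξ₁ : Ordinal, ξ₀ < ξ₁ → ξ₁ < lam → j ξ₀ < j ξ₁)
    (hcont : ∀ η < lam, η.cof = Cardinal.aleph0 → j η = sSup (j '' Set.Iio η))
    (E : Set Ordinal) (hE : E ⊆ Set.Iio lam)
    (θ : Ordinal) (hθcof : θ.cof = Cardinal.aleph0)
    (hθlp : IsLimitPointOf (j '' E) θ)
    (ζ₀ : Ordinal) (hζ₀ : ζ₀ < lam) (hθle : θ ≤ j ζ₀) :
    ∃ ζ < lam, IsLimitPointOf E ζ ∧ ζ.cof = Cardinal.aleph0 ∧ j ζ = θ := by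
  have hj : StrictMonoOn j (Iio lam) := fun a _ b hb hab ↦ hmono a b hab hb
  set ζ := sInf {ξ | θ ≤ j ξ}
  have hθζ : θ ≤ j ζ := csInf_mem (s := {ξ | θ ≤ j ξ}) ⟨ζ₀, hθle⟩
  have hζlam : ζ < lam := (csInf_le' (s := {ξ | θ ≤ j ξ}) hθle).trans_lt hζ₀
  have hlt_iff {x} (hx : x < lam) : x < ζ ↔ j x < θ :=
    lt_sInf_setOf_le_apply_iff hj.monotoneOn ⟨ζ₀, hθle⟩ hx
  have hbelow (γ) (hγ : γ < ζ) : j γ < θ := (hlt_iff (hγ.trans hζlam)).1 hγ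
  have hpullback (y) (hy : y < θ) : ∃ x ∈ E, y < j x ∧ x < ζ := by
    obtain ⟨_, ⟨x, hxE, rfl⟩, hyx, hxθ⟩ := hθlp.2 y hy
    exact ⟨x, hxE, hyx, (hlt_iff (hE hxE)).2 hxθ⟩
  have hunbounded (γ) (hγ : γ < ζ) : ∃ x ∈ E, γ < x ∧ x < ζ := by
    obtain ⟨x, hxE, hγx, hxζ⟩ := hpullback (j γ) (hbelow γ hγ)
    exact ⟨x, hxE, (hj.lt_iff_lt (hγ.trans hζlam) (hE hxE)).1 hγx, hxζ⟩
  have hζcof : ζ.cof = Cardinal.aleph0 := by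
    have hcof := Ordinal.lift_cof_eq_of_strictMonoOn (hj.mono (Iio_subset_Iio hζlam.le)) hbelow
      fun y hy ↦ (hpullback y hy).imp fun x ⟨_, hyx, hxζ⟩ ↦ ⟨hxζ, hyx.le⟩
    rwa [hθcof, Cardinal.lift_aleph0, Cardinal.lift_eq_aleph0] at hcof
  have hjζ : j ζ ≤ θ := by
    rw [hcont ζ hζlam hζcof]
    exact csSup_le' (by rintro _ ⟨γ, hγ, rfl⟩; exact (hbelow γ hγ).le)
  have hζlim : IsSuccLimit ζ := Ordinal.one_lt_cof_iff.1 (hζcof ▸ Cardinal.one_lt_aleph0)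
  exact ⟨ζ, hζlam, ⟨hζlim, hunbounded⟩, hζcof, hjζ.antisymm hθζ⟩
end
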